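/- Let a > 1, |b| > 1, a ≠ b, c = (ab−1)/(a−b), and consider Q(z) := (1 + 4ac + 4cz − z²)/(2c) for z ∈ R. If Q, multiplied by (1−z²)/2, has a double root p_0 with p_0 ≠ ±1, then p_0 = 2c, and consequently |p_0| > 2, so p_0 ∉ (−1, 1). -/

import Mathlib

/-!
At a double root `p₀ ≠ ±1` of `P = Q · (1 - z²)/2` the factor `(1 - z²)/2` does not vanish,
so `p₀` is a double root of `Q` itself, i.e. a root with `Q'(p₀) = 0`. As `2c · Q` is the
downward parabola `-z² + 4cz + (1 + 4ac)`, its only critical point is its vertex `z = 2c`.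
Finally `|c| > 1` because `(ab - 1)² - (a - b)² = (a² - 1)(b² - 1) > 0`.
-/

theorem sq_mul_sub_one_sub_sq_sub {R : Type*} [CommRing R] (a b : R) :
    (a * b - 1) ^ 2 - (a - b) ^ 2 = (a ^ 2 - 1) * (b ^ 2 - 1) := by
  ring

theorem one_lt_abs_mul_sub_one_div_sub {a b : ℝ} (ha : 1 < |a|) (hb : 1 < |b|) (hab : a ≠ b) :
    1 < |(a * b - 1) / (a - b)| := by
  have hsub : 0 < |a - b| := abs_pos.mpr (sub_ne_zero.mpr hab)
  have hsq : (a - b) ^ 2 < (a * b - 1) ^ 2 := by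
    have ha2 : 1 < a ^ 2 := by nlinarith [sq_abs a]
    have hb2 : 1 < b ^ 2 := by nlinarith [sq_abs b]
    nlinarith [sq_mul_sub_one_sub_sq_sub a b, mul_pos (sub_pos.mpr ha2) (sub_pos.mpr hb2)]
  rw [abs_div, one_lt_div hsub]
  exact sq_lt_sq.mp hsq

theorem HasDerivAt.eq_zero_and_eq_zero_of_mul {𝕜 : Type*} [NontriviallyNormedField 𝕜]
    {f g : 𝕜 → 𝕜} {f' g' x : 𝕜} (hf : HasDerivAt f f' x) (hg : HasDerivAt g g' x)
    (hgx : g x ≠ 0) (hroot : f x * g x = 0) (hderiv : _root_.deriv (fun y => f y * g y) x = 0) :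
    f x = 0 ∧ f' = 0 := by
  have hfx : f x = 0 := (mul_eq_zero.mp hroot).resolve_right hgx
  refine ⟨hfx, ?_⟩
  have hsum : f' * g x + f x * g' = 0 := (hf.mul hg).deriv.symm.trans hderiv
  rw [hfx, zero_mul, add_zero] at hsum
  exact (mul_eq_zero.mp hsum).resolve_right hgx

/-- Let `a > 1`, `|b| > 1`, `a ≠ b`, `c = (ab−1)/(a−b)`, and
`Q(z) = (1 + 4ac + 4cz − z²)/(2c)`. If the quartic `P(z) = Q(z)(1−z²)/2` has a
double root `p₀` with `p₀ ≠ ±1`, then `p₀ = 2c`, hence `|p₀| > 2` and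
`p₀ ∉ (−1, 1)`. -/
theorem stmt_8 (a b : ℝ) (ha : 1 < a) (hb : 1 < |b|) (hab : a ≠ b)
    (c : ℝ) (hc : c = (a * b - 1) / (a - b))
    (Q P : ℝ → ℝ)
    (hQ : ∀ z, Q z = (1 + 4 * a * c + 4 * c * z - z ^ 2) / (2 * c))
    (hPdef : ∀ z, P z = Q z * (1 - z ^ 2) / 2)
    (p0 : ℝ) (hp1 : p0 ≠ 1) (hp2 : p0 ≠ -1)
    (hroot : P p0 = 0) (hdroot : deriv P p0 = 0) :
    p0 = 2 * c ∧ 2 < |p0| ∧ p0 ∉ Set.Ioo (-1 : ℝ) 1 := by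
  have hc1 : 1 < |c| :=
    hc ▸ one_lt_abs_mul_sub_one_div_sub (by rwa [abs_of_pos (by linarith)]) hb hab
  have hc0 : c ≠ 0 := abs_pos.mp (by linarith)
  have hQ' : HasDerivAt Q ((4 * c - 2 * p0) / (2 * c)) p0 := by
    have h := ((((hasDerivAt_id p0).const_mul (4 * c)).const_add (1 + 4 * a * c)).sub
      (hasDerivAt_pow 2 p0)).div_const (2 * c)
    refine (h.congr_deriv ?_).congr_of_eventuallyEq (Filter.Eventually.of_forall hQ)
    norm_num
  have hfactor : HasDerivAt (fun z : ℝ => (1 - z ^ 2) / 2) (-p0) p0 :=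
    (((hasDerivAt_pow 2 p0).const_sub 1).div_const 2).congr_deriv (by push_cast; ring)
  have hfactor_ne : (1 - p0 ^ 2) / 2 ≠ 0 :=
    div_ne_zero (sub_ne_zero.mpr (sq_ne_one_iff.mpr ⟨hp1, hp2⟩).symm) two_ne_zero
  have hP : P = fun z => Q z * ((1 - z ^ 2) / 2) := funext fun z => by rw [hPdef, mul_div_assoc]
  subst hP
  obtain ⟨-, hcrit⟩ := hQ'.eq_zero_and_eq_zero_of_mul hfactor hfactor_ne hroot hdroot
  have hp0 : p0 = 2 * c := by
    rw [div_eq_zero_iff, or_iff_left (mul_ne_zero two_ne_zero hc0)] at hcrit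
    linarith
  have habs : 2 < |p0| := by
    rw [hp0, abs_mul, abs_two]
    linarith
  refine ⟨hp0, habs, fun hmem => ?_⟩
  linarith [abs_lt.mpr hmem]
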